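/- Let h be a quaternion of norm 1, let (b₀, b₁) ∈ ℂ² ∖ {(0,0)}, set q = b₀ + b₁·j, and for θ ∈ ℝ set h_θ = (q⁻¹·(cos θ + (sin θ)·i)·q)·h. Then: (i) h_θ has norm 1; (ii) the complex components of q·h_θ and of q·h represent the same point of ℂP¹ (so the circle action (h, [b₀:b₁])·e^{iθ} = (h_θ, [b₀:b₁]) preserves each fibre of the parametrised Hopf map Φ); and (iii) h_θ = h if and only if cos θ + (sin θ)·i = 1 (so the action is free). -/

import Mathlib

open Quaternion

noncomputable section

/-- The embedding of `ℂ` into the quaternions `ℍ` as the real span of `1` and `i`. -/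
def cq (z : ℂ) : ℍ[ℝ] := ⟨z.re, z.im, 0, 0⟩

/-- The imaginary unit `j` of the quaternions. -/
def jq : ℍ[ℝ] := ⟨0, 0, 1, 0⟩

/-- `σ₀(a₀,a₁) = (1 + (a₁/a₀)·j)/‖1 + (a₁/a₀)·j‖`, defined for `a₀ ≠ 0`. -/
def sigma0 (a₀ a₁ : ℂ) : ℍ[ℝ] := ‖cq 1 + cq (a₁ / a₀) * jq‖⁻¹ • (cq 1 + cq (a₁ / a₀) * jq)

/-- `σ₁(a₀,a₁) = (a₀/a₁ + j)/‖a₀/a₁ + j‖`, defined for `a₁ ≠ 0`. -/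
def sigma1 (a₀ a₁ : ℂ) : ℍ[ℝ] := ‖cq (a₀ / a₁) + jq‖⁻¹ • (cq (a₀ / a₁) + jq)

/-- The complex components of a quaternion: `q = c₀ + c₁·j` with
`c₀ = re q + (im_i q)·i` and `c₁ = im_j q + (im_k q)·i`. -/
def comps (q : ℍ[ℝ]) : ℂ × ℂ := (⟨q.re, q.imI⟩, ⟨q.imJ, q.imK⟩)

/-- The complex projective line `ℂP¹`, as the projectivization of `ℂ²`. -/
abbrev CP1 := Projectivization ℂ (ℂ × ℂ)

/-- The quotient topology on `ℂP¹`. -/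
instance : TopologicalSpace CP1 := instTopologicalSpaceQuotient

/-! In any division ring, `q * ((q⁻¹ * z * q) * h) = z * (q * h)`: the action replaces `q * h` by
`z * (q * h)`. In `ℍ`, left multiplication by a complex number `c` multiplies both complex
components by `c`, so it fixes the point of `ℂP¹`; for `c = cos θ + (sin θ)·i` it is an isometry,
and freeness is cancellation of the nonzero factors `q` and `h`. -/

section GroupWithZero

variable {G : Type*} [GroupWithZero G] {q : G}

lemma mul_inv_mul_mul_mul (hq : q ≠ 0) (z h : G) : q * (q⁻¹ * z * q * h) = z * (q * h) := by
  rw [mul_assoc q⁻¹, mul_assoc q⁻¹, ← mul_assoc q, mul_inv_cancel₀ hq, one_mul, mul_assoc]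

lemma inv_mul_mul_mul_eq_self_iff (hq : q ≠ 0) {z h : G} (hh : h ≠ 0) :
    q⁻¹ * z * q * h = h ↔ z = 1 := by
  rw [mul_eq_right₀ hh, mul_assoc, inv_mul_eq_one₀ hq, eq_comm, mul_eq_right₀ hq]

end GroupWithZero

lemma norm_inv_mul_mul_mul {R : Type*} [NormedDivisionRing R] {q : R} (hq : q ≠ 0) (z h : R) :
    ‖q⁻¹ * z * q * h‖ = ‖z‖ * ‖h‖ := by
  have : ‖q‖ ≠ 0 := norm_ne_zero_iff.mpr hq
  rw [norm_mul, norm_mul, norm_mul, norm_inv]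
  field_simp

@[simp] lemma cq_re (z : ℂ) : (cq z).re = z.re := rfl
@[simp] lemma cq_imI (z : ℂ) : (cq z).imI = z.im := rfl
@[simp] lemma cq_imJ (z : ℂ) : (cq z).imJ = 0 := rfl
@[simp] lemma cq_imK (z : ℂ) : (cq z).imK = 0 := rfl
@[simp] lemma jq_re : jq.re = 0 := rfl
@[simp] lemma jq_imI : jq.imI = 0 := rfl
@[simp] lemma jq_imJ : jq.imJ = 1 := rfl
@[simp] lemma jq_imK : jq.imK = 0 := rfl

lemma comps_cq_add_cq_mul_jq (b₀ b₁ : ℂ) : comps (cq b₀ + cq b₁ * jq) = (b₀, b₁) := by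
  simp [comps]

lemma comps_cq_mul (c : ℂ) (w : ℍ[ℝ]) : comps (cq c * w) = c • comps w := by
  simp only [comps, Prod.smul_mk, Prod.mk.injEq, Complex.ext_iff, Quaternion.re_mul,
    Quaternion.imI_mul, Quaternion.imJ_mul, Quaternion.imK_mul, cq_re, cq_imI, cq_imJ, cq_imK,
    smul_eq_mul, Complex.mul_re, Complex.mul_im]
  constructor <;> constructor <;> ring

lemma norm_cq (z : ℂ) : ‖cq z‖ = ‖z‖ := by
  have : ‖cq z‖ ^ 2 = ‖z‖ ^ 2 := by
    rw [sq, ← Quaternion.normSq_eq_norm_mul_self, Complex.sq_norm, Quaternion.normSq_def',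
      Complex.normSq_apply]
    simp only [cq_re, cq_imI, cq_imJ, cq_imK]
    ring
  exact (sq_eq_sq₀ (norm_nonneg _) (norm_nonneg _)).mp this

lemma mk_comps_cq_mul (c : ℂ) (w : ℍ[ℝ]) (h₁ : comps (cq c * w) ≠ 0) (h₂ : comps w ≠ 0) :
    Projectivization.mk ℂ _ h₁ = Projectivization.mk ℂ _ h₂ :=
  (Projectivization.mk_eq_mk_iff' ℂ _ _ h₁ h₂).mpr ⟨c, (comps_cq_mul c w).symm⟩

lemma norm_cos_add_sin_mul_I (θ : ℝ) : ‖(⟨Real.cos θ, Real.sin θ⟩ : ℂ)‖ = 1 := by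
  have : (⟨Real.cos θ, Real.sin θ⟩ : ℂ) = Complex.exp (θ * Complex.I) := by
    apply Complex.ext <;> simp [Complex.exp_ofReal_mul_I_re, Complex.exp_ofReal_mul_I_im]
  rw [this, Complex.norm_exp_ofReal_mul_I]

/-- The circle action `(h,[b₀:b₁])·e^{iθ} = ((q⁻¹·(cos θ + sin θ·i)·q)·h, [b₀:b₁])`, with
`q = b₀ + b₁·j`: it takes values in unit quaternions, preserves each fibre of the
parametrised Hopf map, and is free. -/
theorem circle_action_on_fibres (h : ℍ[ℝ]) (hh : ‖h‖ = 1) (b₀ b₁ : ℂ)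
    (hb : ((b₀, b₁) : ℂ × ℂ) ≠ 0) (θ : ℝ) :
    ‖((cq b₀ + cq b₁ * jq)⁻¹ * cq ⟨Real.cos θ, Real.sin θ⟩ * (cq b₀ + cq b₁ * jq)) * h‖ = 1 ∧
    (∀ (h1 : comps ((cq b₀ + cq b₁ * jq) *
          (((cq b₀ + cq b₁ * jq)⁻¹ * cq ⟨Real.cos θ, Real.sin θ⟩ *
            (cq b₀ + cq b₁ * jq)) * h)) ≠ 0)
       (h2 : comps ((cq b₀ + cq b₁ * jq) * h) ≠ 0),
       Projectivization.mk ℂ _ h1 = Projectivization.mk ℂ _ h2) ∧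
    (((cq b₀ + cq b₁ * jq)⁻¹ * cq ⟨Real.cos θ, Real.sin θ⟩ * (cq b₀ + cq b₁ * jq)) * h = h ↔
      cq ⟨Real.cos θ, Real.sin θ⟩ = 1) := by
  set q := cq b₀ + cq b₁ * jq
  have hq : q ≠ 0 := ne_of_apply_ne comps (by rw [comps_cq_add_cq_mul_jq]; exact hb)
  have hh₀ : h ≠ 0 := norm_ne_zero_iff.mp (hh ▸ one_ne_zero)
  refine ⟨?_, fun h₁ h₂ => ?_, ?_⟩
  · rw [norm_inv_mul_mul_mul hq, norm_cq, norm_cos_add_sin_mul_I, hh, one_mul]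
  · simp_rw [mul_inv_mul_mul_mul hq] at h₁ ⊢
    exact mk_comps_cq_mul _ _ h₁ h₂
  · exact inv_mul_mul_mul_eq_self_iff hq hh₀
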